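/- arXiv:2510.07832 — 2 statements merged into one kernel-verified Lean document; each statement's English description precedes it below -/
import Mathlib

section
/- Let {Ω₁,…,Ω_l} be a partition of {1,…,n} into nonempty blocks, η ∈ ℝⁿ, and η̃ the vector replacing each entry of η by its block average. Suppose that for any assignment ω ∈ {1,…,m}ⁿ satisfying the constraint set C, any reassignment that gives all indices in a single block Ω_i the same label (chosen among the labels already used in Ω_i under ω) also satisfies C. Then there exists an optimal solution minimizing ‖Wv − η̃‖₂ over (ω, v) with ω ∈ C in which all indices in the same block receive a common label. -/
/-!
For a fixed labelling ω the best `v` puts on each label the mean of `η̃` over the indices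
carrying it, so it suffices to minimise the within-cluster sum of squares over `C`. On a block
`η̃` is a single number `t`; giving the whole block the label whose cluster mean is closest to
`t` does not increase this cost. Collapsing the blocks one after another turns a minimiser into
a block-constant one, and the closure hypothesis keeps every intermediate labelling in `C`.
-/

open Finset

lemma sum_sq_mean_sub_le {ι : Type*} (S : Finset ι) (f : ι → ℝ) (x : ℝ) :
    ∑ k ∈ S, ((∑ j ∈ S, f j) / #S - f k) ^ 2 ≤ ∑ k ∈ S, (x - f k) ^ 2 := by
  rcases S.eq_empty_or_nonempty with rfl | hS
  · simp
  set μ := (∑ j ∈ S, f j) / #S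
  have hcard : (0 : ℝ) < #S := by exact_mod_cast hS.card_pos
  have hdev : ∑ k ∈ S, (μ - f k) = 0 := by
    rw [sum_sub_distrib, sum_const, nsmul_eq_mul, mul_div_cancel₀ _ hcard.ne', sub_self]
  have hsplit : ∑ k ∈ S, (x - f k) ^ 2
      = ∑ k ∈ S, (μ - f k) ^ 2 + #S * (x - μ) ^ 2 + 2 * (x - μ) * ∑ k ∈ S, (μ - f k) := by
    rw [← nsmul_eq_mul, ← sum_const, mul_sum, ← sum_add_distrib, ← sum_add_distrib]
    exact sum_congr rfl fun k _ => by ring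
  rw [hsplit, hdev]
  nlinarith [sq_nonneg (x - μ)]

section ClusterCost

variable {ι κ : Type*} [Fintype ι] [DecidableEq κ]

noncomputable def fiberMean (y : ι → ℝ) (ω : ι → κ) (c : κ) : ℝ :=
  (∑ k ∈ univ.filter (ω · = c), y k) / #(univ.filter (ω · = c))

noncomputable def clusterCost (y : ι → ℝ) (ω : ι → κ) : ℝ :=
  ∑ k, (fiberMean y ω (ω k) - y k) ^ 2

lemma sum_sq_comp_eq_sum_fiberwise [Fintype κ] (y : ι → ℝ) (ω : ι → κ) (v : κ → ℝ) :
    ∑ k, (v (ω k) - y k) ^ 2 = ∑ c, ∑ k ∈ univ.filter (ω · = c), (v c - y k) ^ 2 := by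
  rw [← sum_fiberwise univ ω]
  refine sum_congr rfl fun c _ => sum_congr rfl fun k hk => ?_
  rw [(mem_filter.mp hk).2]

lemma clusterCost_le [Fintype κ] (y : ι → ℝ) (ω : ι → κ) (v : κ → ℝ) :
    clusterCost y ω ≤ ∑ k, (v (ω k) - y k) ^ 2 := by
  rw [clusterCost, sum_sq_comp_eq_sum_fiberwise, sum_sq_comp_eq_sum_fiberwise]
  exact sum_le_sum fun c _ => sum_sq_mean_sub_le _ y (v c)

variable {β : Type*} [DecidableEq β]

lemma exists_clusterCost_collapse_le [Fintype κ] (σ : ι → β) (y : ι → ℝ)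
    (hy : ∀ k k', σ k = σ k' → y k = y k') (ω : ι → κ) (k₀ : ι) :
    ∃ k₁, σ k₁ = σ k₀ ∧
      clusterCost y (fun k => if σ k = σ k₀ then ω k₁ else ω k) ≤ clusterCost y ω := by
  obtain ⟨k₁, hk₁, hmin⟩ := exists_min_image (univ.filter (σ · = σ k₀))
    (fun k => (fiberMean y ω (ω k) - y k₀) ^ 2) ⟨k₀, by simp⟩
  refine ⟨k₁, (mem_filter.mp hk₁).2, ?_⟩
  refine (clusterCost_le y _ (fiberMean y ω)).trans (sum_le_sum fun k _ => ?_)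
  by_cases hk : σ k = σ k₀
  · simp only [hk, if_true, hy k k₀ hk]
    exact hmin k (by simp [hk])
  · simp only [hk, if_false, le_refl]

lemma exists_mem_blockConstant_clusterCost_le [Fintype κ] (σ : ι → β) (y : ι → ℝ)
    (hy : ∀ k k', σ k = σ k' → y k = y k') (C : Set (ι → κ))
    (hC : ∀ ω ∈ C, ∀ i : β, ∀ c : κ, (∃ k, σ k = i ∧ ω k = c) →
      (fun k => if σ k = i then c else ω k) ∈ C)
    {ω : ι → κ} (hω : ω ∈ C) :
    ∃ ω' ∈ C, clusterCost y ω' ≤ clusterCost y ω ∧ ∀ k k', σ k = σ k' → ω' k = ω' k' := by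
  suffices h : ∀ s : Finset ι, ∃ ω' ∈ C, clusterCost y ω' ≤ clusterCost y ω ∧
      ∀ k ∈ s, ∀ k', σ k = σ k' → ω' k = ω' k' by
    obtain ⟨ω', hω', hle, hconst⟩ := h univ
    exact ⟨ω', hω', hle, fun k k' => hconst k (mem_univ k) k'⟩
  classical
  intro s
  induction s using Finset.induction with
  | empty => exact ⟨ω, hω, le_rfl, by simp⟩
  | insert k₀ s _ ih =>
    obtain ⟨ω₁, hω₁, hle₁, hconst₁⟩ := ih
    obtain ⟨k₁, hk₁, hle⟩ := exists_clusterCost_collapse_le σ y hy ω₁ k₀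
    refine ⟨_, hC ω₁ hω₁ (σ k₀) (ω₁ k₁) ⟨k₁, hk₁, rfl⟩, hle.trans hle₁, ?_⟩
    intro k hk k' hkk'
    by_cases h : σ k = σ k₀
    · simp [h, ← hkk']
    · have hks : k ∈ s := (mem_insert.mp hk).resolve_left (by rintro rfl; exact h rfl)
      simp [h, ← hkk', hconst₁ k hks k' hkk']

end ClusterCost

theorem stmt_11_general {n l m : ℕ} (σ : Fin n → Fin l)
    (η : Fin n → ℝ) (ηt : Fin n → ℝ)
    (hηt : ∀ k, ηt k = (∑ j ∈ Finset.univ.filter fun j => σ j = σ k, η j) /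
      ((Finset.univ.filter fun j => σ j = σ k).card : ℝ))
    (C : Set (Fin n → Fin m)) (hC : C.Nonempty)
    (hclosed : ∀ ω ∈ C, ∀ i : Fin l, ∀ c : Fin m, (∃ k, σ k = i ∧ ω k = c) →
      (fun k => if σ k = i then c else ω k) ∈ C) :
    ∃ ω ∈ C, ∃ v : Fin m → ℝ,
      (∀ ω' ∈ C, ∀ v' : Fin m → ℝ,
        Real.sqrt (∑ k, (v (ω k) - ηt k) ^ 2) ≤ Real.sqrt (∑ k, (v' (ω' k) - ηt k) ^ 2)) ∧
      ∀ k k', σ k = σ k' → ω k = ω k' := by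
  have hblock : ∀ k k', σ k = σ k' → ηt k = ηt k' := fun k k' h => by rw [hηt k, hηt k', h]
  obtain ⟨ω₀, hω₀, hmin⟩ := Set.exists_min_image C (clusterCost ηt) C.toFinite hC
  obtain ⟨ω, hω, hle, hconst⟩ :=
    exists_mem_blockConstant_clusterCost_le σ ηt hblock C hclosed hω₀
  refine ⟨ω, hω, fiberMean ηt ω, fun ω' hω' v' => Real.sqrt_le_sqrt ?_, hconst⟩
  calc clusterCost ηt ω ≤ clusterCost ηt ω₀ := hle
    _ ≤ clusterCost ηt ω' := hmin ω' hω'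
    _ ≤ ∑ k, (v' (ω' k) - ηt k) ^ 2 := clusterCost_le ηt ω' v'

/-- If the constraint set C is closed under collapsing all labels within a block to
a single label already used in that block, then there exists an optimal solution of
min ‖Wv − η̃‖₂ over ω ∈ C and v in which all indices of a block receive a common label. -/
theorem stmt_11 {n l m : ℕ} (σ : Fin n → Fin l) (hσ : Function.Surjective σ)
    (η : Fin n → ℝ) (ηt : Fin n → ℝ)
    (hηt : ∀ k, ηt k = (∑ j ∈ Finset.univ.filter fun j => σ j = σ k, η j) /
      ((Finset.univ.filter fun j => σ j = σ k).card : ℝ))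
    (C : Set (Fin n → Fin m)) (hC : C.Nonempty)
    (hclosed : ∀ ω ∈ C, ∀ i : Fin l, ∀ c : Fin m, (∃ k, σ k = i ∧ ω k = c) →
      (fun k => if σ k = i then c else ω k) ∈ C) :
    ∃ ω ∈ C, ∃ v : Fin m → ℝ,
      (∀ ω' ∈ C, ∀ v' : Fin m → ℝ,
        Real.sqrt (∑ k, (v (ω k) - ηt k) ^ 2) ≤ Real.sqrt (∑ k, (v' (ω' k) - ηt k) ^ 2)) ∧
      ∀ k k', σ k = σ k' → ω k = ω k' :=
  stmt_11_general σ η ηt hηt C hC hclosed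
end

section
/- Let K be a ρ×ρ symmetric positive-definite matrix with minimum eigenvalue λ₁, S a ρ×ρ symmetric positive-definite matrix with maximum eigenvalue λ₂, and k : ℝ^d → ℝ^ρ, κ : ℝ^d → ℝ differentiable. Define σ²(x) = κ(x) − k(x)ᵀK⁻¹k(x) + k(x)ᵀK⁻¹SK⁻¹k(x). Then |∂σ²/∂x_i(x)| ≤ |∂κ/∂x_i(x)| + (2‖k(x)‖₂/λ₁)(1 + λ₂/λ₁)·‖∂k/∂x_i(x)‖₂. -/
/-!
The derivative of `σ²` in direction `eᵢ` is `∂ᵢκ − (aᵀK⁻¹k + kᵀK⁻¹a) + (aᵀMk + kᵀMa)` with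
`a = ∂ᵢk` and `M = K⁻¹SK⁻¹`. Each bilinear term is at most `‖A‖₂ ‖a‖ ‖k‖` by Cauchy–Schwarz, and
expanding in an orthonormal eigenbasis bounds the spectral norm of a symmetric matrix by the
largest absolute eigenvalue, giving `‖K⁻¹‖₂ ≤ 1/λ₁` and `‖M‖₂ ≤ ‖K⁻¹‖₂ ‖S‖₂ ‖K⁻¹‖₂ ≤ λ₂/λ₁²`.
-/

open Matrix WithLp
open scoped RealInnerProductSpace

section

variable {n : Type*} [Fintype n] [DecidableEq n] {A : Matrix n n ℝ}

namespace Matrix.IsHermitian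

theorem toEuclideanCLM_eigenvectorBasis (hA : A.IsHermitian) (j : n) :
    toEuclideanCLM (𝕜 := ℝ) A (hA.eigenvectorBasis j) =
      hA.eigenvalues j • hA.eigenvectorBasis j := by
  ext1
  simp [hA.mulVec_eigenvectorBasis]

theorem inner_eigenvectorBasis_toEuclideanCLM (hA : A.IsHermitian) (j : n)
    (x : EuclideanSpace ℝ n) :
    ⟪hA.eigenvectorBasis j, toEuclideanCLM (𝕜 := ℝ) A x⟫ =
      hA.eigenvalues j * ⟪hA.eigenvectorBasis j, x⟫ := by
  have hsa : IsSelfAdjoint (toEuclideanCLM (𝕜 := ℝ) A) := by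
    simpa using hA.isSelfAdjoint.map (toEuclideanCLM (𝕜 := ℝ))
  rw [← ContinuousLinearMap.adjoint_inner_left, hsa.adjoint_eq,
    hA.toEuclideanCLM_eigenvectorBasis, real_inner_smul_left]

theorem norm_toEuclideanCLM_le (hA : A.IsHermitian) {μ : ℝ} (hμ : 0 ≤ μ)
    (h : ∀ j, |hA.eigenvalues j| ≤ μ) : ‖toEuclideanCLM (𝕜 := ℝ) A‖ ≤ μ := by
  refine ContinuousLinearMap.opNorm_le_bound _ hμ fun x => ?_
  set b := hA.eigenvectorBasis
  have hsq : ‖toEuclideanCLM (𝕜 := ℝ) A x‖ ^ 2 ≤ (μ * ‖x‖) ^ 2 := by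
    rw [← b.sum_sq_inner_right, mul_pow, ← b.sum_sq_inner_right, Finset.mul_sum]
    gcongr with j
    rw [hA.inner_eigenvectorBasis_toEuclideanCLM, mul_pow]
    exact mul_le_mul_of_nonneg_right (sq_le_sq' (neg_le_of_abs_le (h j)) (le_of_abs_le (h j)))
      (sq_nonneg _)
  exact (pow_le_pow_iff_left₀ (norm_nonneg _) (by positivity) two_ne_zero).mp hsq

end Matrix.IsHermitian

theorem Matrix.PosSemidef.nonneg_of_mem_spectrum (hA : A.PosSemidef) {μ : ℝ}
    (hμ : μ ∈ spectrum ℝ A) : 0 ≤ μ := by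
  obtain ⟨j, rfl⟩ := hA.1.spectrum_real_eq_range_eigenvalues ▸ hμ
  exact hA.eigenvalues_nonneg j

theorem Matrix.PosDef.pos_of_mem_spectrum (hA : A.PosDef) {μ : ℝ}
    (hμ : μ ∈ spectrum ℝ A) : 0 < μ := by
  obtain ⟨j, rfl⟩ := hA.1.spectrum_real_eq_range_eigenvalues ▸ hμ
  exact hA.eigenvalues_pos j

theorem Matrix.PosSemidef.norm_toEuclideanCLM_le (hA : A.PosSemidef) {μ : ℝ}
    (hμ : IsGreatest (spectrum ℝ A) μ) : ‖toEuclideanCLM (𝕜 := ℝ) A‖ ≤ μ :=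
  hA.1.norm_toEuclideanCLM_le (hA.nonneg_of_mem_spectrum hμ.1) fun j => by
    rw [abs_of_nonneg (hA.eigenvalues_nonneg j)]
    exact hμ.2 (hA.1.eigenvalues_mem_spectrum_real j)

theorem Matrix.PosDef.norm_toEuclideanCLM_inv_le (hA : A.PosDef) {μ : ℝ}
    (hμ : IsLeast (spectrum ℝ A) μ) : ‖toEuclideanCLM (𝕜 := ℝ) A⁻¹‖ ≤ μ⁻¹ := by
  have hμ0 : 0 < μ := hA.pos_of_mem_spectrum hμ.1
  have hinv := hA.inv
  refine hinv.1.norm_toEuclideanCLM_le (inv_nonneg.mpr hμ0.le) fun j => ?_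
  set ν := hinv.1.eigenvalues j
  have hν : 0 < ν := hinv.eigenvalues_pos j
  have hν_inv : ν⁻¹ ∈ spectrum ℝ A := by
    have h := spectrum.inv_mem_iff (r := Units.mk0 ν⁻¹ (inv_ne_zero hν.ne'))
      (a := hA.isUnit.unit)
    simp only [Units.val_mk0, IsUnit.unit_spec, Units.val_inv_eq_inv_val, inv_inv,
      Matrix.coe_units_inv] at h
    exact h.mpr (hinv.1.eigenvalues_mem_spectrum_real j)
  rw [abs_of_pos hν]
  exact (le_inv_comm₀ hμ0 hν).mp (hμ.2 hν_inv)

theorem Matrix.abs_dotProduct_mulVec_le {C : ℝ} (hA : ‖toEuclideanCLM (𝕜 := ℝ) A‖ ≤ C)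
    (u w : n → ℝ) : |u ⬝ᵥ A *ᵥ w| ≤ C * ‖toLp 2 u‖ * ‖toLp 2 w‖ := by
  rw [← inner_toEuclideanCLM A (toLp 2 u) (toLp 2 w), mul_right_comm]
  calc _ ≤ ‖toLp 2 u‖ * ‖toEuclideanCLM (𝕜 := ℝ) A (toLp 2 w)‖ := abs_real_inner_le_norm _ _
    _ ≤ ‖toLp 2 u‖ * (C * ‖toLp 2 w‖) := by
      gcongr
      exact (ContinuousLinearMap.le_opNorm _ _).trans (by gcongr)
    _ = _ := by ring

omit [DecidableEq n] in
theorem EuclideanSpace.norm_toLp_eq_sqrt (v : n → ℝ) :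
    ‖toLp 2 v‖ = √(∑ j, v j ^ 2) := by
  simp [EuclideanSpace.norm_eq]

theorem HasFDerivAt.dotProduct_mulVec {E : Type*} [NormedAddCommGroup E] [NormedSpace ℝ E]
    {f : E → n → ℝ} {f' : E →L[ℝ] n → ℝ} {x : E} (hf : HasFDerivAt f f' x) (A : Matrix n n ℝ) :
    ∃ q' : E →L[ℝ] ℝ, HasFDerivAt (fun y => f y ⬝ᵥ A *ᵥ f y) q' x ∧
      ∀ v, q' v = f' v ⬝ᵥ A *ᵥ f x + f x ⬝ᵥ A *ᵥ f' v := by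
  set B := LinearMap.toContinuousBilinearMap
    (toLinearMap₂' ℝ A : (n → ℝ) →ₗ[ℝ] (n → ℝ) →ₗ[ℝ] ℝ)
  have hB : (fun y => f y ⬝ᵥ A *ᵥ f y) = fun y => B (f y) (f y) := by
    ext y
    simp [B, toLinearMap₂'_apply']
  exact ⟨_, hB ▸ B.hasFDerivAt_of_bilinear hf hf,
    fun v => by simp [B, toLinearMap₂'_apply', add_comm]⟩

end

/-- For σ²(x) = κ(x) − k(x)ᵀK⁻¹k(x) + k(x)ᵀK⁻¹SK⁻¹k(x) with K symmetric positive
definite with minimum eigenvalue λ₁, S symmetric positive definite with maximum eigenvalue λ₂,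
and k, κ differentiable:
|∂σ²/∂xᵢ(x)| ≤ |∂κ/∂xᵢ(x)| + (2‖k(x)‖₂/λ₁)(1 + λ₂/λ₁)·‖∂k/∂xᵢ(x)‖₂. -/
theorem stmt_17 {d ρ : ℕ} (K S : Matrix (Fin ρ) (Fin ρ) ℝ)
    (hK : K.PosDef) (hS : S.PosDef)
    (l1 l2 : ℝ) (hl1 : IsLeast (spectrum ℝ K) l1) (hl2 : IsGreatest (spectrum ℝ S) l2)
    (k : (Fin d → ℝ) → (Fin ρ → ℝ)) (hk : Differentiable ℝ k)
    (κ : (Fin d → ℝ) → ℝ) (hκ : Differentiable ℝ κ)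
    (σ2 : (Fin d → ℝ) → ℝ)
    (hσ2 : ∀ x, σ2 x = κ x - dotProduct (k x) (K⁻¹.mulVec (k x)) +
      dotProduct (k x) ((K⁻¹ * S * K⁻¹).mulVec (k x)))
    (x : Fin d → ℝ) (i : Fin d) :
    |fderiv ℝ σ2 x (Pi.single i 1)| ≤
      |fderiv ℝ κ x (Pi.single i 1)| +
        (2 * Real.sqrt (∑ j, k x j ^ 2) / l1) * (1 + l2 / l1) *
          Real.sqrt (∑ j, (fderiv ℝ (fun y => k y j) x (Pi.single i 1)) ^ 2) := by
  set e : Fin d → ℝ := Pi.single i 1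
  have hl1_pos : 0 < l1 := hK.pos_of_mem_spectrum hl1.1
  have hKinv : ‖toEuclideanCLM (𝕜 := ℝ) K⁻¹‖ ≤ l1⁻¹ := hK.norm_toEuclideanCLM_inv_le hl1
  have hM : ‖toEuclideanCLM (𝕜 := ℝ) (K⁻¹ * S * K⁻¹)‖ ≤ l1⁻¹ * l2 * l1⁻¹ := by
    rw [map_mul, map_mul]
    refine norm_mul₃_le.trans ?_
    have hS_norm := hS.posSemidef.norm_toEuclideanCLM_le hl2
    have hl2_nonneg : 0 ≤ l2 := (norm_nonneg _).trans hS_norm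
    gcongr
  obtain ⟨q₁, hq₁, hq₁_apply⟩ := (hk x).hasFDerivAt.dotProduct_mulVec K⁻¹
  obtain ⟨q₂, hq₂, hq₂_apply⟩ := (hk x).hasFDerivAt.dotProduct_mulVec (K⁻¹ * S * K⁻¹)
  have hσ : HasFDerivAt σ2 (fderiv ℝ κ x - q₁ + q₂) x :=
    funext hσ2 ▸ ((hκ x).hasFDerivAt.sub hq₁).add hq₂
  have hcoord : ∀ j, fderiv ℝ (fun y => k y j) x e = fderiv ℝ k x e j := fun j => by
    simp [fderiv_apply (hk x)]
  simp only [hσ.fderiv, hcoord, ← EuclideanSpace.norm_toLp_eq_sqrt, _root_.add_apply,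
    _root_.sub_apply, hq₁_apply, hq₂_apply]
  set u := k x
  set a := fderiv ℝ k x e
  have h₁ := abs_dotProduct_mulVec_le hKinv a u
  have h₂ := abs_dotProduct_mulVec_le hKinv u a
  have h₃ := abs_dotProduct_mulVec_le hM a u
  have h₄ := abs_dotProduct_mulVec_le hM u a
  have hrhs : 2 * ‖toLp 2 u‖ / l1 * (1 + l2 / l1) * ‖toLp 2 a‖ =
      2 * (l1⁻¹ * ‖toLp 2 a‖ * ‖toLp 2 u‖) +
        2 * (l1⁻¹ * l2 * l1⁻¹ * ‖toLp 2 a‖ * ‖toLp 2 u‖) := by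
    field_simp
  rw [hrhs]
  have hκ' := abs_le.mp (le_refl |fderiv ℝ κ x e|)
  rw [abs_le] at h₁ h₂ h₃ h₄ ⊢
  constructor <;> linarith
end
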